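/- arXiv:math/0703854 — 6 statements merged into one kernel-verified Lean document; each statement's English description precedes it below -/
import Mathlib

section
/- For any probability distribution π on a measurable space G and any measurable function h: G → ℝ (bounded below suitably), the infimum over probability distributions ρ on G of (E_{g∼ρ} h(g) + KL(ρ, π)) equals -log E_{g∼π} exp(-h(g)), and the infimum is attained by the Gibbs distribution π_{-h} with density proportional to exp(-h(g)) with respect to π. -/
/-!
Tilting `π` by `f` changes the log-likelihood ratio of any `ρ ≪ π` by `-f + log ∫ exp f dπ`,
so `KL(ρ, π.tilted f) = KL(ρ, π) - E_ρ f + log E_π exp f`. Gibbs' inequality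
`KL(ρ, π.tilted f) ≥ 0` is therefore the Donsker–Varadhan bound, with equality at
`ρ = π.tilted f`. With `f = -h` the tilted measure is the Gibbs distribution `π_{-h}`.
-/

open MeasureTheory

namespace MeasureTheory

variable {G : Type*} [MeasurableSpace G] {π ρ : Measure G} {f : G → ℝ}

lemma integral_llr_nonneg [IsProbabilityMeasure ρ] [IsProbabilityMeasure π] (hρπ : ρ ≪ π)
    (hint : Integrable (llr ρ π) ρ) : 0 ≤ ∫ g, llr ρ π g ∂ρ := by
  simpa using InformationTheory.integral_llr_add_sub_measure_univ_nonneg hρπ hint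

lemma integral_sub_log_integral_exp_le_integral_llr [IsProbabilityMeasure ρ]
    [IsProbabilityMeasure π] (hρπ : ρ ≪ π) (hfρ : Integrable f ρ)
    (hfπ : Integrable (fun g ↦ Real.exp (f g)) π) (hint : Integrable (llr ρ π) ρ) :
    ∫ g, f g ∂ρ - Real.log (∫ g, Real.exp (f g) ∂π) ≤ ∫ g, llr ρ π g ∂ρ := by
  have := isProbabilityMeasure_tilted hfπ
  have hgibbs := integral_llr_nonneg (hρπ.trans (absolutelyContinuous_tilted hfπ))
    (integrable_llr_tilted_right hρπ hfρ hint hfπ)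
  rw [integral_llr_tilted_right hρπ hfρ hfπ hint] at hgibbs
  linarith

lemma llr_tilted_self_ae_eq [SigmaFinite π] (hfπ : Integrable (fun g ↦ Real.exp (f g)) π) :
    llr (π.tilted f) π =ᵐ[π.tilted f] fun g ↦ f g - Real.log (∫ g, Real.exp (f g) ∂π) :=
  (tilted_absolutelyContinuous π f).ae_le (log_rnDeriv_tilted_left_self hfπ)

lemma integrable_llr_tilted_self [IsFiniteMeasure π]
    (hfπ : Integrable (fun g ↦ Real.exp (f g)) π) (hf : Integrable f (π.tilted f)) :
    Integrable (llr (π.tilted f) π) (π.tilted f) :=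
  (integrable_congr (llr_tilted_self_ae_eq hfπ)).mpr (hf.sub (integrable_const _))

lemma integral_llr_tilted_self [IsProbabilityMeasure π]
    (hfπ : Integrable (fun g ↦ Real.exp (f g)) π) (hf : Integrable f (π.tilted f)) :
    ∫ g, llr (π.tilted f) π g ∂(π.tilted f) =
      ∫ g, f g ∂(π.tilted f) - Real.log (∫ g, Real.exp (f g) ∂π) := by
  have := isProbabilityMeasure_tilted hfπ
  rw [integral_congr_ae (llr_tilted_self_ae_eq hfπ), integral_sub hf (integrable_const _),
    integral_const, probReal_univ, one_smul]

end MeasureTheory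

/-- Kullback-Leibler duality formula: the infimum over probability measures `ρ` of
`E_ρ h + KL(ρ, π)` equals `-log E_π exp(-h)`, attained by the Gibbs distribution. -/
theorem stmt0 {G : Type*} [MeasurableSpace G] (π : Measure G) [IsProbabilityMeasure π]
    (h : G → ℝ) (hmeas : Measurable h) (C : ℝ) (hbdd : ∀ g, |h g| ≤ C) :
    IsLeast
      { x : ℝ | ∃ ρ : Measure G, IsProbabilityMeasure ρ ∧ ρ ≪ π ∧
          Integrable (fun g => Real.log ((ρ.rnDeriv π g).toReal)) ρ ∧
          x = (∫ g, h g ∂ρ) + ∫ g, Real.log ((ρ.rnDeriv π g).toReal) ∂ρ }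
      (-(Real.log (∫ g, Real.exp (-(h g)) ∂π))) ∧
    (∫ g, h g ∂(π.withDensity fun g =>
        ENNReal.ofReal (Real.exp (-(h g)) / ∫ g', Real.exp (-(h g')) ∂π)))
      + (∫ g, Real.log (((π.withDensity fun g =>
            ENNReal.ofReal (Real.exp (-(h g)) / ∫ g', Real.exp (-(h g')) ∂π)).rnDeriv π g).toReal)
          ∂(π.withDensity fun g =>
            ENNReal.ofReal (Real.exp (-(h g)) / ∫ g', Real.exp (-(h g')) ∂π)))
      = -(Real.log (∫ g, Real.exp (-(h g)) ∂π)) := by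
  have hint (μ : Measure G) [IsFiniteMeasure μ] : Integrable h μ :=
    .of_bound hmeas.aestronglyMeasurable C (ae_of_all _ hbdd)
  have hexp : Integrable (fun g ↦ Real.exp (-h g)) π :=
    .of_bound (by fun_prop) (Real.exp C) (ae_of_all _ fun g ↦ by
      simpa using (neg_le_abs (h g)).trans (hbdd g))
  have := isProbabilityMeasure_tilted hexp
  change IsLeast _ _ ∧ ∫ g, h g ∂(π.tilted (-h ·)) +
    ∫ g, llr (π.tilted (-h ·)) π g ∂(π.tilted (-h ·)) = _
  have hgibbs : ∫ g, h g ∂(π.tilted (-h ·)) +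
      ∫ g, llr (π.tilted (-h ·)) π g ∂(π.tilted (-h ·)) =
        -Real.log (∫ g, Real.exp (-h g) ∂π) := by
    rw [integral_llr_tilted_self hexp (hint _).neg, integral_neg]
    ring
  refine ⟨⟨⟨_, inferInstance, tilted_absolutelyContinuous _ _,
    integrable_llr_tilted_self hexp (hint _).neg, hgibbs.symm⟩, ?_⟩, hgibbs⟩
  rintro _ ⟨ρ, hρ, hρπ, hllr, rfl⟩
  have hDV := integral_sub_log_integral_exp_le_integral_llr (f := (-h ·)) hρπ (hint ρ).neg hexp
    hllr
  rw [integral_neg] at hDV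
  change _ ≤ _ + ∫ g, llr ρ π g ∂ρ
  linarith
end

section
/- For any probability distribution ρ on a set G, any real-valued function L on G, and any λ > 0, it holds that E_{g'∼ρ} log E_{g∼ρ} exp(λ[L(g') - L(g)] - (λ²/2)[L(g') - L(g)]²) ≤ 0. -/
/-!
Write `D g' g = λ (L g' - L g)`, so that the integrand is `exp (D - D² / 2)` with `D` antisymmetric.
By `cosh x ≤ exp (x² / 2)`, the values at `(g', g)` and `(g, g')` sum to at most `2`, so after
symmetrizing the double integral `∫∫ exp (D - D² / 2)` is at most `1`. Then `log y ≤ y - 1`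
bounds the outer integral of the logarithm by this double integral minus `1`.
-/

open MeasureTheory

namespace Real

theorem exp_sub_sq_div_two_le (x : ℝ) : exp (x - x ^ 2 / 2) ≤ exp (1 / 2) :=
  exp_le_exp.2 (by nlinarith [sq_nonneg (x - 1)])

theorem exp_sub_sq_div_two_add_exp_neg_sub_sq_div_two_le_two (x : ℝ) :
    exp (x - x ^ 2 / 2) + exp (-x - x ^ 2 / 2) ≤ 2 := by
  have h := cosh_le_exp_half_sq x
  rw [cosh_eq] at h
  rw [exp_sub, exp_sub, ← add_div, div_le_iff₀ (exp_pos _)]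
  linarith

end Real

section Symmetrization

variable {α : Type*} [MeasurableSpace α] {μ : Measure α} [IsProbabilityMeasure μ]

theorem integral_log_nonpos_of_integral_le_one {h : α → ℝ} (hpos : ∀ᵐ a ∂μ, 0 < h a)
    (hint : Integrable h μ) (hle : ∫ a, h a ∂μ ≤ 1) : ∫ a, Real.log (h a) ∂μ ≤ 0 := by
  by_cases hlog : Integrable (fun a => Real.log (h a)) μ
  · calc ∫ a, Real.log (h a) ∂μ ≤ ∫ a, (h a - 1) ∂μ :=
          integral_mono_ae hlog (hint.sub (integrable_const 1))
            (hpos.mono fun a ha => Real.log_le_sub_one_of_pos ha)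
      _ = ∫ a, h a ∂μ - 1 := by simp [integral_sub hint (integrable_const 1)]
      _ ≤ 0 := by linarith
  · rw [integral_undef hlog]

theorem integral_le_one_of_add_comp_swap_le_two {f : α × α → ℝ} (hf : Integrable f (μ.prod μ))
    (hswap : ∀ p, f p + f p.swap ≤ 2) : ∫ p, f p ∂(μ.prod μ) ≤ 1 := by
  have hsum : ∫ p, f p ∂(μ.prod μ) + ∫ p, f p.swap ∂(μ.prod μ) ≤ 2 :=
    calc ∫ p, f p ∂(μ.prod μ) + ∫ p, f p.swap ∂(μ.prod μ)
        = ∫ p, (f p + f p.swap) ∂(μ.prod μ) := (integral_add hf hf.swap).symm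
      _ ≤ ∫ _, (2 : ℝ) ∂(μ.prod μ) := integral_mono (hf.add hf.swap) (integrable_const _) hswap
      _ = 2 := by simp
  rw [integral_prod_swap f] at hsum
  linarith

theorem integral_log_integral_exp_sub_sq_div_two_nonpos {D : α → α → ℝ}
    (hD : Measurable (Function.uncurry D)) (hanti : ∀ a b, D b a = -D a b) :
    ∫ a, Real.log (∫ b, Real.exp (D a b - D a b ^ 2 / 2) ∂μ) ∂μ ≤ 0 := by
  set f : α × α → ℝ := fun p => Real.exp (D p.1 p.2 - D p.1 p.2 ^ 2 / 2)
  have hf : Integrable f (μ.prod μ) := by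
    refine Integrable.of_bound (by fun_prop) (Real.exp (1 / 2)) (ae_of_all _ fun p => ?_)
    rw [Real.norm_of_nonneg (Real.exp_pos _).le]
    exact Real.exp_sub_sq_div_two_le _
  refine integral_log_nonpos_of_integral_le_one ?_ hf.integral_prod_left ?_
  · filter_upwards [hf.prod_right_ae] with a ha using integral_exp_pos ha
  · refine (integral_prod f hf).symm.le.trans
      (integral_le_one_of_add_comp_swap_le_two hf fun p => ?_)
    simp only [f, Prod.fst_swap, Prod.snd_swap, hanti p.1 p.2, neg_sq]
    exact Real.exp_sub_sq_div_two_add_exp_neg_sub_sq_div_two_le_two _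

end Symmetrization

theorem stmt2_general {G : Type*} [MeasurableSpace G] (ρ : Measure G) [IsProbabilityMeasure ρ]
    (L : G → ℝ) (hL : Measurable L) (l : ℝ) :
    (∫ g', Real.log (∫ g, Real.exp (l * (L g' - L g) - l ^ 2 / 2 * (L g' - L g) ^ 2) ∂ρ) ∂ρ)
      ≤ 0 := by
  have hD : Measurable (Function.uncurry fun g' g => l * (L g' - L g)) := by fun_prop
  have key := integral_log_integral_exp_sub_sq_div_two_nonpos (μ := ρ) hD
    fun g' g => (by ring : l * (L g - L g') = -(l * (L g' - L g)))
  convert key using 7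
  ring

/-- Symmetrization inequality:
`E_{g'∼ρ} log E_{g∼ρ} exp(λ[L g' - L g] - (λ²/2)[L g' - L g]²) ≤ 0`. -/
theorem stmt2 {G : Type*} [MeasurableSpace G] (ρ : Measure G) [IsProbabilityMeasure ρ]
    (L : G → ℝ) (hL : Measurable L) (l : ℝ) (hl : 0 < l) :
    (∫ g', Real.log (∫ g, Real.exp (l * (L g' - L g) - l ^ 2 / 2 * (L g' - L g) ^ 2) ∂ρ) ∂ρ)
      ≤ 0 :=
  stmt2_general ρ L hL l
end

section
/- Let μ be a probability measure on a space A and W: A → ℝ measurable such that λ ↦ (1/λ) log E_{a∼μ} exp(-λ W(a)) is defined on an interval of positive reals. Then this map is nondecreasing on that interval; indeed its derivative equals (1/λ²) KL(μ_{-λW}, μ) ≥ 0, where μ_{-λW} is the Gibbs distribution with density proportional to exp(-λ W). -/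
/-!
With `X = -W` the function is `λ ↦ cgf X μ λ / λ`, the logarithm of the `L^λ(μ)` norm of
`exp X`; on a probability space `L^p` norms increase with `p`, which gives monotonicity.
For the Gibbs measure `ν = μ.tilted (λ X)` one has `llr ν μ = λ X - cgf X μ λ` `ν`-a.e.,
and `ν[X] = cgf' λ`, so `KL(ν, μ) = λ cgf' λ - cgf λ`, which is `λ²` times the derivative of
`cgf λ / λ` by the quotient rule. Gibbs' inequality gives `KL(ν, μ) ≥ 0`.
-/

open MeasureTheory ProbabilityTheory InformationTheory Real Set

section

variable {Ω : Type*} {mΩ : MeasurableSpace Ω} {μ : Measure Ω} {f X : Ω → ℝ} {t : ℝ}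

lemma llr_tilted_self_ae_eq [SigmaFinite μ] (hf : Integrable (fun x ↦ exp (f x)) μ)
    (hfm : AEMeasurable f μ) :
    llr (μ.tilted f) μ =ᵐ[μ.tilted f] fun x ↦ f x - log (∫ x, exp (f x) ∂μ) := by
  filter_upwards [tilted_absolutelyContinuous μ f (llr_tilted_left .rfl hf hfm),
    tilted_absolutelyContinuous μ f (llr_self μ)] with x hx hx_self
  simp [hx, hx_self]

lemma integral_llr_tilted_self [SigmaFinite μ] [NeZero μ]
    (hf : Integrable (fun x ↦ exp (f x)) μ) (hfm : AEMeasurable f μ)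
    (hf_tilted : Integrable f (μ.tilted f)) :
    ∫ x, llr (μ.tilted f) μ x ∂(μ.tilted f) =
      ∫ x, f x ∂(μ.tilted f) - log (∫ x, exp (f x) ∂μ) := by
  have := isProbabilityMeasure_tilted hf
  rw [integral_congr_ae (llr_tilted_self_ae_eq hf hfm),
    integral_sub hf_tilted (integrable_const _)]
  simp

lemma integral_llr_tilted_self_nonneg [IsProbabilityMeasure μ]
    (hf : Integrable (fun x ↦ exp (f x)) μ) (hfm : AEMeasurable f μ)
    (hf_tilted : Integrable f (μ.tilted f)) :
    0 ≤ ∫ x, llr (μ.tilted f) μ x ∂(μ.tilted f) := by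
  have := isProbabilityMeasure_tilted hf
  have h_int : Integrable (llr (μ.tilted f) μ) (μ.tilted f) :=
    (integrable_congr (llr_tilted_self_ae_eq hf hfm)).2 (hf_tilted.sub (integrable_const _))
  simpa using integral_llr_add_sub_measure_univ_nonneg (tilted_absolutelyContinuous μ f) h_int

lemma eLpNorm_exp_eq_mgf_rpow (ht : 0 < t) (h : Integrable (fun x ↦ exp (t * X x)) μ) :
    eLpNorm (fun x ↦ exp (X x)) (ENNReal.ofReal t) μ = ENNReal.ofReal (mgf X μ t ^ t⁻¹) := by
  have h_enorm : ∀ x, ‖exp (X x)‖ₑ ^ t = ENNReal.ofReal (exp (t * X x)) := fun x ↦ by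
    rw [← ofReal_norm, norm_of_nonneg (exp_pos _).le, ENNReal.ofReal_rpow_of_pos (exp_pos _),
      ← exp_mul, mul_comm]
  rw [eLpNorm_eq_lintegral_rpow_enorm_toReal (by simpa using ht) ENNReal.ofReal_ne_top,
    ENNReal.toReal_ofReal ht.le, one_div]
  simp_rw [h_enorm]
  rw [← ofReal_integral_eq_lintegral_ofReal h (ae_of_all _ fun _ ↦ (exp_pos _).le),
    ENNReal.ofReal_rpow_of_nonneg (integral_nonneg fun _ ↦ (exp_pos _).le) (by positivity), mgf]

lemma integrable_mul_tilted_mul (ht : t ∈ interior (integrableExpSet X μ)) :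
    Integrable (t * X ·) (μ.tilted (t * X ·)) :=
  ((memLp_tilted_mul ht 1).integrable le_rfl).const_mul t

variable [IsProbabilityMeasure μ]

lemma monotoneOn_cgf_div (hX : AEMeasurable X μ) :
    MonotoneOn (fun t ↦ cgf X μ t / t) (integrableExpSet X μ ∩ Ioi 0) := by
  rintro s ⟨hs_int, hs⟩ t ⟨ht_int, ht⟩ hst
  have h_norm := eLpNorm_le_eLpNorm_of_exponent_le (ENNReal.ofReal_le_ofReal hst)
    (hX.exp.aestronglyMeasurable) (μ := μ)
  rw [eLpNorm_exp_eq_mgf_rpow hs hs_int, eLpNorm_exp_eq_mgf_rpow ht ht_int,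
    ENNReal.ofReal_le_ofReal_iff (rpow_nonneg mgf_nonneg _)] at h_norm
  have h_log := log_le_log (rpow_pos_of_pos (mgf_pos hs_int) _) h_norm
  rwa [log_rpow (mgf_pos hs_int), log_rpow (mgf_pos ht_int), inv_mul_eq_div,
    inv_mul_eq_div] at h_log

lemma integral_llr_tilted_mul (ht : t ∈ interior (integrableExpSet X μ)) :
    ∫ x, llr (μ.tilted (t * X ·)) μ x ∂(μ.tilted (t * X ·)) =
      t * deriv (cgf X μ) t - cgf X μ t := by
  rw [integral_llr_tilted_self (interior_subset (s := integrableExpSet X μ) ht)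
      ((aemeasurable_of_mem_interior_integrableExpSet ht).const_mul t)
      (integrable_mul_tilted_mul ht),
    integral_const_mul, integral_tilted_mul_self ht, cgf, mgf]

lemma integral_llr_tilted_mul_nonneg (ht : t ∈ interior (integrableExpSet X μ)) :
    0 ≤ ∫ x, llr (μ.tilted (t * X ·)) μ x ∂(μ.tilted (t * X ·)) :=
  integral_llr_tilted_self_nonneg (interior_subset (s := integrableExpSet X μ) ht)
    ((aemeasurable_of_mem_interior_integrableExpSet ht).const_mul t) (integrable_mul_tilted_mul ht)

lemma hasDerivAt_cgf_div (ht0 : t ≠ 0) (ht : t ∈ interior (integrableExpSet X μ)) :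
    HasDerivAt (fun t ↦ cgf X μ t / t)
      ((∫ x, llr (μ.tilted (t * X ·)) μ x ∂(μ.tilted (t * X ·))) / t ^ 2) t := by
  rw [integral_llr_tilted_mul ht]
  exact ((analyticAt_cgf ht).differentiableAt.hasDerivAt.div (hasDerivAt_id' t) ht0).congr_deriv
    (by ring)

end

theorem stmt4_general {A : Type*} [MeasurableSpace A] (μ : Measure A) [IsProbabilityMeasure μ]
    (W : A → ℝ) (hW : Measurable W) (s : Set ℝ) (hs : s ⊆ Set.Ioi (0:ℝ))
    (hint : ∀ l ∈ s, Integrable (fun a => Real.exp (-(l * W a))) μ) :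
    MonotoneOn (fun l => 1 / l * Real.log (∫ a, Real.exp (-(l * W a)) ∂μ)) s ∧
    ∀ l ∈ interior s,
      HasDerivAt (fun l => 1 / l * Real.log (∫ a, Real.exp (-(l * W a)) ∂μ))
        (1 / l ^ 2 *
          ∫ a, Real.log (((μ.withDensity fun a =>
              ENNReal.ofReal (Real.exp (-(l * W a)) / ∫ a', Real.exp (-(l * W a')) ∂μ)).rnDeriv μ a).toReal)
            ∂(μ.withDensity fun a =>
              ENNReal.ofReal (Real.exp (-(l * W a)) / ∫ a', Real.exp (-(l * W a')) ∂μ))) l ∧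
      0 ≤ ∫ a, Real.log (((μ.withDensity fun a =>
              ENNReal.ofReal (Real.exp (-(l * W a)) / ∫ a', Real.exp (-(l * W a')) ∂μ)).rnDeriv μ a).toReal)
            ∂(μ.withDensity fun a =>
              ENNReal.ofReal (Real.exp (-(l * W a)) / ∫ a', Real.exp (-(l * W a')) ∂μ)) := by
  have h_neg : ∀ l, (fun a ↦ -(l * W a)) = (l * (-W) ·) := fun l ↦ by
    simp only [Pi.neg_apply, mul_neg]
  have h_fun :
      (fun l ↦ 1 / l * log (∫ a, exp (-(l * W a)) ∂μ)) = fun l ↦ cgf (-W) μ l / l := by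
    ext l
    simp only [cgf, mgf, Pi.neg_apply, mul_neg, one_div_mul_eq_div]
  have hs_exp : s ⊆ integrableExpSet (-W) μ ∩ Ioi 0 := fun l hl ↦
    ⟨by simpa only [integrableExpSet, mem_ofPred_eq, Pi.neg_apply, mul_neg] using hint l hl,
      hs hl⟩
  refine ⟨h_fun ▸ (monotoneOn_cgf_div hW.neg.aemeasurable).mono hs_exp, fun l hl ↦ ?_⟩
  have hl_exp : l ∈ interior (integrableExpSet (-W) μ) :=
    interior_mono (hs_exp.trans inter_subset_left) hl
  change HasDerivAt _ (1 / l ^ 2 * ∫ a, llr (μ.tilted fun a ↦ -(l * W a)) μ a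
      ∂(μ.tilted fun a ↦ -(l * W a))) l ∧
    0 ≤ ∫ a, llr (μ.tilted fun a ↦ -(l * W a)) μ a ∂(μ.tilted fun a ↦ -(l * W a))
  rw [h_fun, h_neg]
  exact ⟨(hasDerivAt_cgf_div (hs (interior_subset hl)).ne' hl_exp).congr_deriv (by ring),
    integral_llr_tilted_mul_nonneg hl_exp⟩

/-- The map `λ ↦ (1/λ) log E_μ exp(-λ W)` is nondecreasing on an interval of positive reals
on which it is defined, and its derivative equals `(1/λ²) KL(μ_{-λW}, μ) ≥ 0`, where
`μ_{-λW}` is the Gibbs distribution with density proportional to `exp(-λ W)`. -/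
theorem stmt4 {A : Type*} [MeasurableSpace A] (μ : Measure A) [IsProbabilityMeasure μ]
    (W : A → ℝ) (hW : Measurable W) (s : Set ℝ) (hs : s ⊆ Set.Ioi (0:ℝ))
    (hconn : s.OrdConnected)
    (hint : ∀ l ∈ s, Integrable (fun a => Real.exp (-(l * W a))) μ) :
    MonotoneOn (fun l => 1 / l * Real.log (∫ a, Real.exp (-(l * W a)) ∂μ)) s ∧
    ∀ l ∈ interior s,
      HasDerivAt (fun l => 1 / l * Real.log (∫ a, Real.exp (-(l * W a)) ∂μ))
        (1 / l ^ 2 *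
          ∫ a, Real.log (((μ.withDensity fun a =>
              ENNReal.ofReal (Real.exp (-(l * W a)) / ∫ a', Real.exp (-(l * W a')) ∂μ)).rnDeriv μ a).toReal)
            ∂(μ.withDensity fun a =>
              ENNReal.ofReal (Real.exp (-(l * W a)) / ∫ a', Real.exp (-(l * W a')) ∂μ))) l ∧
      0 ≤ ∫ a, Real.log (((μ.withDensity fun a =>
              ENNReal.ofReal (Real.exp (-(l * W a)) / ∫ a', Real.exp (-(l * W a')) ∂μ)).rnDeriv μ a).toReal)
            ∂(μ.withDensity fun a =>
              ENNReal.ofReal (Real.exp (-(l * W a)) / ∫ a', Real.exp (-(l * W a')) ∂μ)) :=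
  stmt4_general μ W hW s hs hint
end

section
/- Let 𝒴 = ℝ, q > 1, and ℓ(y,y') = |y − y'|^q. For y₁ ≠ y₂ and p ∈ [0,1], the function y ↦ p|y − y₁|^q + (1−p)|y − y₂|^q attains its infimum at y* = (p^r y₁ + (1−p)^r y₂)/(p^r + (1−p)^r) with r = 1/(q−1), and the infimum equals φ(p) = p(1−p) |y₂ − y₁|^q / (p^{1/(q−1)} + (1−p)^{1/(q−1)})^{q−1}. -/
/-!
Write `a = p ^ r` and `b = (1 - p) ^ r`, so that `p = a ^ (q - 1)` and `1 - p = b ^ (q - 1)`.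
At the weighted mean `y* = (a y₁ + b y₂) / (a + b)` the two distances are `b c / (a + b)` and
`a c / (a + b)` with `c = |y₂ - y₁|`, which gives the value. For any other `y`, the triangle
inequality `c ≤ |y - y₁| + |y - y₂|` and Radon's inequality
`(u + v) ^ q / (a + b) ^ (q - 1) ≤ u ^ q / a ^ (q - 1) + v ^ q / b ^ (q - 1)`
(convexity of `x ↦ x ^ q` at `u / a` and `v / b`) bound the objective below by the same value.
-/

open Real Set

namespace Real

lemma rpow_eq_rpow_sub_one_mul {x q : ℝ} (hx : 0 ≤ x) (hq : q ≠ 0) :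
    x ^ q = x ^ (q - 1) * x := by
  rw [← rpow_add_one' hx (by simpa using hq), sub_add_cancel]

lemma mul_div_rpow_eq_rpow_div_rpow_sub_one {t x q : ℝ} (ht : 0 < t) (hx : 0 ≤ x)
    (hq : q ≠ 0) :
    t * (x / t) ^ q = x ^ q / t ^ (q - 1) := by
  rw [div_rpow hx ht.le, rpow_eq_rpow_sub_one_mul ht.le hq]
  field_simp

theorem add_rpow_div_rpow_le {q a b u v : ℝ} (hq : 1 ≤ q) (ha : 0 < a) (hb : 0 < b)
    (hu : 0 ≤ u) (hv : 0 ≤ v) :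
    (u + v) ^ q / (a + b) ^ (q - 1) ≤ u ^ q / a ^ (q - 1) + v ^ q / b ^ (q - 1) := by
  have hs : 0 < a + b := add_pos ha hb
  have hq0 : q ≠ 0 := by positivity
  have hweights : a / (a + b) + b / (a + b) = 1 := by field_simp
  have hconv := (convexOn_rpow hq).2 (mem_Ici.2 (div_nonneg hu ha.le))
    (mem_Ici.2 (div_nonneg hv hb.le)) (div_pos ha hs).le (div_pos hb hs).le hweights
  have hmean : a / (a + b) * (u / a) + b / (a + b) * (v / b) = (u + v) / (a + b) := by
    field_simp
  simp only [smul_eq_mul, hmean] at hconv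
  calc (u + v) ^ q / (a + b) ^ (q - 1) = (a + b) * ((u + v) / (a + b)) ^ q :=
        (mul_div_rpow_eq_rpow_div_rpow_sub_one hs (add_nonneg hu hv) hq0).symm
    _ ≤ (a + b) * (a / (a + b) * (u / a) ^ q + b / (a + b) * (v / b) ^ q) := by gcongr
    _ = a * (u / a) ^ q + b * (v / b) ^ q := by field_simp
    _ = u ^ q / a ^ (q - 1) + v ^ q / b ^ (q - 1) := by
        rw [mul_div_rpow_eq_rpow_div_rpow_sub_one ha hu hq0,
          mul_div_rpow_eq_rpow_div_rpow_sub_one hb hv hq0]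

end Real

section WeightedDistance

variable {q a b : ℝ}

lemma abs_weightedMean_sub_left (hb : 0 ≤ b) (hab : 0 < a + b) (y₁ y₂ : ℝ) :
    |(a * y₁ + b * y₂) / (a + b) - y₁| = b * |y₂ - y₁| / (a + b) := by
  have : (a * y₁ + b * y₂) / (a + b) - y₁ = b * (y₂ - y₁) / (a + b) := by field_simp; ring
  rw [this, abs_div, abs_mul, abs_of_nonneg hb, abs_of_pos hab]

theorem weighted_rpow_dist_at_weightedMean (hq : q ≠ 0) (ha : 0 ≤ a) (hb : 0 ≤ b)
    (hab : 0 < a + b) (y₁ y₂ : ℝ) :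
    a ^ (q - 1) * |(a * y₁ + b * y₂) / (a + b) - y₁| ^ q
        + b ^ (q - 1) * |(a * y₁ + b * y₂) / (a + b) - y₂| ^ q
      = a ^ (q - 1) * b ^ (q - 1) * |y₂ - y₁| ^ q / (a + b) ^ (q - 1) := by
  have hab' : 0 < b + a := by rwa [add_comm]
  have h₂ := abs_weightedMean_sub_left ha hab' y₂ y₁
  rw [add_comm b a, add_comm (b * y₂), abs_sub_comm y₁] at h₂
  rw [abs_weightedMean_sub_left hb hab, h₂, div_rpow (by positivity) hab.le,
    div_rpow (by positivity) hab.le, mul_rpow hb (abs_nonneg _), mul_rpow ha (abs_nonneg _),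
    rpow_eq_rpow_sub_one_mul ha hq, rpow_eq_rpow_sub_one_mul hb hq,
    rpow_eq_rpow_sub_one_mul hab.le hq]
  field_simp
  ring

theorem isMinOn_weighted_rpow_dist (hq : 1 < q) (ha : 0 ≤ a) (hb : 0 ≤ b) (hab : 0 < a + b)
    (y₁ y₂ : ℝ) :
    IsMinOn (fun y ↦ a ^ (q - 1) * |y - y₁| ^ q + b ^ (q - 1) * |y - y₂| ^ q) univ
      ((a * y₁ + b * y₂) / (a + b)) := by
  refine isMinOn_iff.2 fun y _ ↦ ?_
  have hq0 : q ≠ 0 := by positivity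
  have hq1 : q - 1 ≠ 0 := sub_ne_zero.2 hq.ne'
  rw [weighted_rpow_dist_at_weightedMean hq0 ha hb hab]
  rcases ha.eq_or_lt with rfl | ha
  · rw [zero_rpow hq1]; simp only [zero_mul, zero_div]; positivity
  rcases hb.eq_or_lt with rfl | hb
  · rw [zero_rpow hq1]; simp only [mul_zero, zero_mul, zero_div]; positivity
  have htriangle : |y₂ - y₁| ≤ |y - y₁| + |y - y₂| := by
    simpa only [abs_sub_comm y₂ y, add_comm] using abs_sub_le y₂ y y₁
  calc a ^ (q - 1) * b ^ (q - 1) * |y₂ - y₁| ^ q / (a + b) ^ (q - 1)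
      ≤ a ^ (q - 1) * b ^ (q - 1) * ((|y - y₁| + |y - y₂|) ^ q / (b + a) ^ (q - 1)) := by
        rw [add_comm b a, mul_div_assoc]; gcongr
    _ ≤ a ^ (q - 1) * b ^ (q - 1)
          * (|y - y₁| ^ q / b ^ (q - 1) + |y - y₂| ^ q / a ^ (q - 1)) := by
        gcongr
        exact add_rpow_div_rpow_le hq.le hb ha (abs_nonneg _) (abs_nonneg _)
    _ = a ^ (q - 1) * |y - y₁| ^ q + b ^ (q - 1) * |y - y₂| ^ q := by field_simp

end WeightedDistance

theorem stmt7_general (q : ℝ) (hq : 1 < q) (y₁ y₂ : ℝ)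
    (p : ℝ) (hp : p ∈ Set.Icc (0:ℝ) 1) :
    IsMinOn (fun y : ℝ => p * |y - y₁| ^ q + (1 - p) * |y - y₂| ^ q) Set.univ
      ((p ^ (1 / (q - 1)) * y₁ + (1 - p) ^ (1 / (q - 1)) * y₂)
        / (p ^ (1 / (q - 1)) + (1 - p) ^ (1 / (q - 1)))) ∧
    p * |(p ^ (1 / (q - 1)) * y₁ + (1 - p) ^ (1 / (q - 1)) * y₂)
          / (p ^ (1 / (q - 1)) + (1 - p) ^ (1 / (q - 1))) - y₁| ^ q
      + (1 - p) * |(p ^ (1 / (q - 1)) * y₁ + (1 - p) ^ (1 / (q - 1)) * y₂)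
          / (p ^ (1 / (q - 1)) + (1 - p) ^ (1 / (q - 1))) - y₂| ^ q
      = p * (1 - p) * |y₂ - y₁| ^ q
          / (p ^ (1 / (q - 1)) + (1 - p) ^ (1 / (q - 1))) ^ (q - 1) := by
  obtain ⟨hp0, hp1⟩ := hp
  have hq1 : q - 1 ≠ 0 := sub_ne_zero.2 hq.ne'
  have hp1' : 0 ≤ 1 - p := sub_nonneg.2 hp1
  have hpa : (p ^ (1 / (q - 1))) ^ (q - 1) = p := by rw [one_div, rpow_inv_rpow hp0 hq1]
  have hpb : ((1 - p) ^ (1 / (q - 1))) ^ (q - 1) = 1 - p := by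
    rw [one_div, rpow_inv_rpow hp1' hq1]
  have hsum : 0 < p ^ (1 / (q - 1)) + (1 - p) ^ (1 / (q - 1)) := by
    rcases hp0.eq_or_lt with rfl | hp0
    · rw [sub_zero, one_rpow]; positivity
    · exact add_pos_of_pos_of_nonneg (rpow_pos_of_pos hp0 _) (rpow_nonneg hp1' _)
  have hmin := isMinOn_weighted_rpow_dist hq (rpow_nonneg hp0 _) (rpow_nonneg hp1' _) hsum y₁ y₂
  have hval := weighted_rpow_dist_at_weightedMean (by positivity) (rpow_nonneg hp0 _)
    (rpow_nonneg hp1' _) hsum y₁ y₂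
  rw [hpa, hpb] at hmin hval
  exact ⟨hmin, hval⟩

/-- For the `L_q` loss with `q > 1`, the function
`y ↦ p|y−y₁|^q + (1−p)|y−y₂|^q` attains its infimum at
`y* = (p^r y₁ + (1−p)^r y₂)/(p^r + (1−p)^r)` with `r = 1/(q−1)`, and the infimum equals
`p(1−p)|y₂−y₁|^q / (p^{1/(q−1)} + (1−p)^{1/(q−1)})^{q−1}`. -/
theorem stmt7 (q : ℝ) (hq : 1 < q) (y₁ y₂ : ℝ) (hne : y₁ ≠ y₂)
    (p : ℝ) (hp : p ∈ Set.Icc (0:ℝ) 1) :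
    IsMinOn (fun y : ℝ => p * |y - y₁| ^ q + (1 - p) * |y - y₂| ^ q) Set.univ
      ((p ^ (1 / (q - 1)) * y₁ + (1 - p) ^ (1 / (q - 1)) * y₂)
        / (p ^ (1 / (q - 1)) + (1 - p) ^ (1 / (q - 1)))) ∧
    p * |(p ^ (1 / (q - 1)) * y₁ + (1 - p) ^ (1 / (q - 1)) * y₂)
          / (p ^ (1 / (q - 1)) + (1 - p) ^ (1 / (q - 1))) - y₁| ^ q
      + (1 - p) * |(p ^ (1 / (q - 1)) * y₁ + (1 - p) ^ (1 / (q - 1)) * y₂)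
          / (p ^ (1 / (q - 1)) + (1 - p) ^ (1 / (q - 1))) - y₂| ^ q
      = p * (1 - p) * |y₂ - y₁| ^ q
          / (p ^ (1 / (q - 1)) + (1 - p) ^ (1 / (q - 1))) ^ (q - 1) :=
  stmt7_general q hq y₁ y₂ p hp
end

section
/- With φ(p) = p(1−p)|y₂−y₁|^q / (p^{1/(q−1)} + (1−p)^{1/(q−1)})^{q−1} for q > 1, the second derivative satisfies φ''(p) = −(q/(q−1)) · [p(1−p)]^{(2−q)/(q−1)} · |y₂−y₁|^q / (p^{1/(q−1)} + (1−p)^{1/(q−1)})^{q+1} for p ∈ (0,1). -/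
/-!
With `r = 1/(q-1)`, dividing numerator and denominator by `(x(1-x))^r` turns φ on `(0,1)` into
`C · g^(1-q)` with `g x = x^(-r) + (1-x)^(-r)`, so that `r(q-1) = 1` gives
`φ' = C · (x^(-r-1) - (1-x)^(-r-1)) · g^(-q)`. In the next derivative everything collapses through
`(x^(s-1) + y^(s-1)) (x^(s+1) + y^(s+1)) - (x^s - y^s)^2 = (xy)^(s-1) (x+y)^2` at `s = -r-1`,
`y = 1-x`, leaving `φ'' = -(r+1) · C · g^(-q-1) · (x(1-x))^(-r-2)`.
-/

open Real Set Filter Topology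

section Algebra

variable {r q : ℝ}

theorem rpow_neg_add_rpow_neg {x y : ℝ} (hx : 0 < x) (hy : 0 < y) :
    x ^ (-r) + y ^ (-r) = (x * y) ^ (-r) * (x ^ r + y ^ r) := by
  have ex : x ^ (-r) * x ^ r = 1 := by rw [← rpow_add hx]; simp
  have ey : y ^ (-r) * y ^ r = 1 := by rw [← rpow_add hy]; simp
  rw [mul_rpow hx.le hy.le]
  linear_combination (-(y ^ (-r))) * ex + (-(x ^ (-r))) * ey

theorem mul_div_rpow_add_rpow (hrq : r * (q - 1) = 1) {x y : ℝ} (hx : 0 < x) (hy : 0 < y) :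
    x * y / (x ^ r + y ^ r) ^ (q - 1) = (x ^ (-r) + y ^ (-r)) ^ (1 - q) := by
  have hS : 0 < x ^ r + y ^ r := by positivity
  rw [rpow_neg_add_rpow_neg hx hy, mul_rpow (by positivity) hS.le, ← rpow_mul (by positivity),
    show -r * (1 - q) = 1 by linear_combination hrq, rpow_one,
    show 1 - q = -(q - 1) by ring, rpow_neg hS.le, div_eq_mul_inv]

theorem rpow_sub_one_add_mul_rpow_add_one_sub_sq (s : ℝ) {x y : ℝ} (hx : 0 < x) (hy : 0 < y) :
    (x ^ (s - 1) + y ^ (s - 1)) * (x ^ (s + 1) + y ^ (s + 1)) - (x ^ s - y ^ s) ^ 2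
      = (x * y) ^ (s - 1) * (x + y) ^ 2 := by
  have hx1 : x ^ s = x ^ (s - 1) * x := by rw [← rpow_add_one hx.ne']; ring_nf
  have hy1 : y ^ s = y ^ (s - 1) * y := by rw [← rpow_add_one hy.ne']; ring_nf
  have hx2 : x ^ (s + 1) = x ^ (s - 1) * x ^ 2 := by
    rw [← rpow_natCast, ← rpow_add hx]; ring_nf
  have hy2 : y ^ (s + 1) = y ^ (s - 1) * y ^ 2 := by
    rw [← rpow_natCast, ← rpow_add hy]; ring_nf
  rw [hx1, hy1, hx2, hy2, mul_rpow hx.le hy.le]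
  ring

theorem rpow_neg_add_rpow_neg_rpow_mul (hrq : r * (q - 1) = 1) {x y : ℝ} (hx : 0 < x)
    (hy : 0 < y) :
    (x ^ (-r) + y ^ (-r)) ^ (-q - 1) * (x * y) ^ (-r - 2)
      = (x * y) ^ (r - 1) / (x ^ r + y ^ r) ^ (q + 1) := by
  have hxy : 0 < x * y := mul_pos hx hy
  have hS : 0 < x ^ r + y ^ r := by positivity
  rw [rpow_neg_add_rpow_neg hx hy, mul_rpow (by positivity) hS.le, ← rpow_mul hxy.le,
    show -q - 1 = -(q + 1) by ring, rpow_neg hS.le, mul_right_comm, ← rpow_add hxy,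
    show -r * -(q + 1) + (-r - 2) = r - 1 by linear_combination hrq, div_eq_mul_inv]

end Algebra

section Deriv

variable {r q x : ℝ}

theorem hasDerivAt_one_sub_rpow (s : ℝ) (hx1 : x ≠ 1) :
    HasDerivAt (fun x : ℝ => (1 - x) ^ s) (-(s * (1 - x) ^ (s - 1))) x :=
  (((hasDerivAt_id' x).const_sub 1).rpow_const (Or.inl (sub_ne_zero.2 hx1.symm))).congr_deriv
    (by ring)

theorem hasDerivAt_rpow_add_one_sub_rpow (s : ℝ) (hx0 : x ≠ 0) (hx1 : x ≠ 1) :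
    HasDerivAt (fun x : ℝ => x ^ s + (1 - x) ^ s)
      (s * (x ^ (s - 1) - (1 - x) ^ (s - 1))) x :=
  ((hasDerivAt_rpow_const (Or.inl hx0)).fun_add (hasDerivAt_one_sub_rpow s hx1)).congr_deriv
    (by ring)

theorem hasDerivAt_rpow_sub_one_sub_rpow (s : ℝ) (hx0 : x ≠ 0) (hx1 : x ≠ 1) :
    HasDerivAt (fun x : ℝ => x ^ s - (1 - x) ^ s)
      (s * (x ^ (s - 1) + (1 - x) ^ (s - 1))) x :=
  ((hasDerivAt_rpow_const (Or.inl hx0)).fun_sub (hasDerivAt_one_sub_rpow s hx1)).congr_deriv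
    (by ring)

theorem hasDerivAt_rpow_neg_add_one_sub_rpow_neg_rpow (hrq : r * (q - 1) = 1)
    (hx : x ∈ Ioo (0 : ℝ) 1) :
    HasDerivAt (fun x : ℝ => (x ^ (-r) + (1 - x) ^ (-r)) ^ (1 - q))
      ((x ^ (-r - 1) - (1 - x) ^ (-r - 1)) * (x ^ (-r) + (1 - x) ^ (-r)) ^ (-q)) x := by
  have hg : 0 < x ^ (-r) + (1 - x) ^ (-r) :=
    add_pos (rpow_pos_of_pos hx.1 _) (rpow_pos_of_pos (sub_pos.2 hx.2) _)
  refine ((hasDerivAt_rpow_add_one_sub_rpow (-r) hx.1.ne' hx.2.ne).rpow_const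
    (Or.inl hg.ne')).congr_deriv ?_
  rw [show 1 - q - 1 = -q by ring]
  linear_combination (x ^ (-r - 1) - (1 - x) ^ (-r - 1)) * (x ^ (-r) + (1 - x) ^ (-r)) ^ (-q) * hrq

theorem hasDerivAt_rpow_neg_sub_one_sub_rpow_neg_sub_one_mul_rpow (hrq : r * (q - 1) = 1)
    (hx : x ∈ Ioo (0 : ℝ) 1) :
    HasDerivAt
      (fun x : ℝ => (x ^ (-r - 1) - (1 - x) ^ (-r - 1)) * (x ^ (-r) + (1 - x) ^ (-r)) ^ (-q))
      (-(r + 1) * (x ^ (-r) + (1 - x) ^ (-r)) ^ (-q - 1) * (x * (1 - x)) ^ (-r - 2)) x := by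
  set g := x ^ (-r) + (1 - x) ^ (-r)
  have hg : 0 < g := add_pos (rpow_pos_of_pos hx.1 _) (rpow_pos_of_pos (sub_pos.2 hx.2) _)
  refine ((hasDerivAt_rpow_sub_one_sub_rpow (-r - 1) hx.1.ne' hx.2.ne).fun_mul
    ((hasDerivAt_rpow_add_one_sub_rpow (-r) hx.1.ne' hx.2.ne).rpow_const
      (Or.inl hg.ne'))).congr_deriv ?_
  have key := rpow_sub_one_add_mul_rpow_add_one_sub_sq (-r - 1) hx.1 (sub_pos.2 hx.2)
  rw [show -r - 1 + 1 = -r by ring, show -r - 1 - 1 = -r - 2 by ring, add_sub_cancel,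
    one_pow, mul_one] at key
  have hgq : g ^ (-q) = g * g ^ (-q - 1) := by
    rw [mul_comm, ← rpow_add_one hg.ne', sub_add_cancel]
  rw [show -r - 1 - 1 = -r - 2 by ring, hgq]
  linear_combination (-(r + 1)) * g ^ (-q - 1) * key
    + g ^ (-q - 1) * (x ^ (-r - 1) - (1 - x) ^ (-r - 1)) ^ 2 * hrq

end Deriv

theorem stmt8_general (q : ℝ) (hq : 1 < q) (y₁ y₂ : ℝ)
    (p : ℝ) (hp : p ∈ Set.Ioo (0:ℝ) 1) :
    deriv (deriv (fun x : ℝ =>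
        x * (1 - x) * |y₂ - y₁| ^ q
          / (x ^ (1 / (q - 1)) + (1 - x) ^ (1 / (q - 1))) ^ (q - 1))) p
      = -(q / (q - 1)) * (p * (1 - p)) ^ ((2 - q) / (q - 1)) * |y₂ - y₁| ^ q
          / (p ^ (1 / (q - 1)) + (1 - p) ^ (1 / (q - 1))) ^ (q + 1) := by
  have hq1 : q - 1 ≠ 0 := sub_ne_zero.2 hq.ne'
  set r := 1 / (q - 1)
  have hrq : r * (q - 1) = 1 := one_div_mul_cancel hq1
  set C := |y₂ - y₁| ^ q
  have hU : Ioo (0 : ℝ) 1 ∈ 𝓝 p := Ioo_mem_nhds hp.1 hp.2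
  have hφ : (fun x : ℝ => x * (1 - x) * C / (x ^ r + (1 - x) ^ r) ^ (q - 1))
      =ᶠ[𝓝 p] fun x => C * (x ^ (-r) + (1 - x) ^ (-r)) ^ (1 - q) :=
    eventually_of_mem hU fun x hx => by
      dsimp only
      rw [mul_div_right_comm, mul_div_rpow_add_rpow hrq hx.1 (sub_pos.2 hx.2), mul_comm]
  have hφ' : deriv (fun x : ℝ => x * (1 - x) * C / (x ^ r + (1 - x) ^ r) ^ (q - 1))
      =ᶠ[𝓝 p] fun x => C * ((x ^ (-r - 1) - (1 - x) ^ (-r - 1))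
        * (x ^ (-r) + (1 - x) ^ (-r)) ^ (-q)) :=
    hφ.deriv.trans <| eventually_of_mem hU fun x hx =>
      ((hasDerivAt_rpow_neg_add_one_sub_rpow_neg_rpow hrq hx).const_mul C).deriv
  rw [hφ'.deriv_eq,
    ((hasDerivAt_rpow_neg_sub_one_sub_rpow_neg_sub_one_mul_rpow hrq hp).const_mul C).deriv,
    show q / (q - 1) = r + 1 by rw [div_eq_iff hq1]; linear_combination -hrq,
    show (2 - q) / (q - 1) = r - 1 by rw [div_eq_iff hq1]; linear_combination -hrq,
    mul_assoc, rpow_neg_add_rpow_neg_rpow_mul hrq hp.1 (sub_pos.2 hp.2)]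
  ring

/-- Second derivative of the optimal mixed `L_q` loss:
`φ''(p) = −(q/(q−1)) [p(1−p)]^{(2−q)/(q−1)} |y₂−y₁|^q / (p^{1/(q−1)} + (1−p)^{1/(q−1)})^{q+1}`. -/
theorem stmt8 (q : ℝ) (hq : 1 < q) (y₁ y₂ : ℝ) (hne : y₁ ≠ y₂)
    (p : ℝ) (hp : p ∈ Set.Ioo (0:ℝ) 1) :
    deriv (deriv (fun x : ℝ =>
        x * (1 - x) * |y₂ - y₁| ^ q
          / (x ^ (1 / (q - 1)) + (1 - x) ^ (1 / (q - 1))) ^ (q - 1))) p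
      = -(q / (q - 1)) * (p * (1 - p)) ^ ((2 - q) / (q - 1)) * |y₂ - y₁| ^ q
          / (p ^ (1 / (q - 1)) + (1 - p) ^ (1 / (q - 1))) ^ (q + 1) :=
  stmt8_general q hq y₁ y₂ p hp
end

section
/- Let μ₁ be a probability measure and consider measurable functions ξ_i: 𝒵^i → ℝ, i = 1,…,n+1, each uniformly bounded above by b ∈ ℝ. Let φ(t) = (e^t − 1 − t)/t². Then for any η > 0 and ε ∈ (0,1), with probability at least 1 − ε over the i.i.d. draw of Z₁,…,Z_{n+1}: Σ_{i=1}^{n+1} ξ_i(Z₁,…,Z_i) ≤ Σ_{i=1}^{n+1} E_{Z_i} ξ_i(Z₁,…,Z_i) + η φ(ηb) Σ_{i=1}^{n+1} E_{Z_i} ξ_i²(Z₁,…,Z_i) + log(1/ε)/η, where E_{Z_i} denotes conditional expectation over Z_i given Z₁,…,Z_{i−1}. -/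
/-!
For `x ≤ u` one has `exp x ≤ 1 + x + x² φ(u)`, because `exp x = 1 + x + x² φ(x)` and
`φ(t) = ∫₀¹ (1 - s) e^{st} ds` is increasing. Applied to `x = η ξᵢ ≤ η b` and integrated over `Zᵢ`,
this makes `exp (η Dᵢ)`, with `Dᵢ = ξᵢ - E_{Zᵢ} ξᵢ - η φ(ηb) E_{Zᵢ} ξᵢ²`, have conditional mean at
most `1`. Since `Dᵢ` only depends on `Z₀, …, Zᵢ`, integrating out the coordinates from the last one
down gives `E exp (η ∑ Dᵢ) ≤ 1`, and Markov's inequality at level `1 / ε` concludes.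
-/

open MeasureTheory Real Function

noncomputable def bernsteinPhi (t : ℝ) : ℝ :=
  if t = 0 then 1 / 2 else (exp t - 1 - t) / t ^ 2

theorem bernsteinPhi_eq_integral (t : ℝ) :
    bernsteinPhi t = ∫ s in (0 : ℝ)..1, (1 - s) * exp (s * t) := by
  rcases eq_or_ne t 0 with rfl | ht
  · simp only [bernsteinPhi, if_pos, mul_zero, exp_zero, mul_one]
    rw [intervalIntegral.integral_sub intervalIntegrable_const
      intervalIntegral.intervalIntegrable_id, intervalIntegral.integral_const, integral_id]
    norm_num
  · have hderiv : ∀ s ∈ Set.uIcc (0 : ℝ) 1, HasDerivAt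
        (fun s ↦ ((1 - s) * t + 1) * exp (s * t) / t ^ 2) ((1 - s) * exp (s * t)) s := by
      intro s _
      refine ((((hasDerivAt_id s).const_sub 1).mul_const t).add_const 1).mul
        ((hasDerivAt_id s).mul_const t).exp |>.div_const (t ^ 2) |>.congr_deriv ?_
      field_simp
      simp only [id]
      ring
    rw [intervalIntegral.integral_eq_sub_of_hasDerivAt hderiv
      ((by fun_prop : Continuous _).intervalIntegrable _ _), bernsteinPhi, if_neg ht]
    simp only [sub_self, zero_mul, one_mul, zero_add, exp_zero, sub_zero, mul_one]
    ring

theorem monotone_bernsteinPhi : Monotone bernsteinPhi := by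
  intro t u htu
  simp only [bernsteinPhi_eq_integral]
  refine intervalIntegral.integral_mono_on zero_le_one
    ((by fun_prop : Continuous _).intervalIntegrable _ _)
    ((by fun_prop : Continuous _).intervalIntegrable _ _) fun s hs ↦ ?_
  have := exp_le_exp.2 (mul_le_mul_of_nonneg_left htu hs.1)
  nlinarith [hs.2]

theorem exp_eq_one_add_add_sq_mul_bernsteinPhi (t : ℝ) :
    exp t = 1 + t + t ^ 2 * bernsteinPhi t := by
  rcases eq_or_ne t 0 with rfl | ht
  · simp
  · rw [bernsteinPhi, if_neg ht]
    field_simp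
    ring

theorem exp_le_one_add_add_sq_mul_bernsteinPhi {t u : ℝ} (htu : t ≤ u) :
    exp t ≤ 1 + t + t ^ 2 * bernsteinPhi u := by
  rw [exp_eq_one_add_add_sq_mul_bernsteinPhi t]
  gcongr
  exact monotone_bernsteinPhi htu

section Bernstein

variable {Ω : Type*} [MeasurableSpace Ω] {μ : Measure Ω} [IsProbabilityMeasure μ]
  {W : Ω → ℝ} {b η : ℝ}

theorem lintegral_exp_mul_le_bernstein (hη : 0 ≤ η) (hWb : ∀ᵐ ω ∂μ, W ω ≤ b)
    (hW : Integrable W μ) (hW2 : Integrable (fun ω ↦ W ω ^ 2) μ) :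
    ∫⁻ ω, ENNReal.ofReal (exp (η * W ω)) ∂μ ≤ ENNReal.ofReal
      (exp (η * ∫ ω, W ω ∂μ + η ^ 2 * bernsteinPhi (η * b) * ∫ ω, W ω ^ 2 ∂μ)) := by
  set A := η * ∫ ω, W ω ∂μ + η ^ 2 * bernsteinPhi (η * b) * ∫ ω, W ω ^ 2 ∂μ
  set g : Ω → ℝ := fun ω ↦ 1 + η * W ω + η ^ 2 * bernsteinPhi (η * b) * W ω ^ 2
  have hexp_le : ∀ᵐ ω ∂μ, exp (η * W ω) ≤ g ω := hWb.mono fun ω hω ↦ by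
    have := exp_le_one_add_add_sq_mul_bernsteinPhi (mul_le_mul_of_nonneg_left hω hη)
    linarith
  have hlin : Integrable (fun ω ↦ 1 + η * W ω) μ := (integrable_const 1).add (hW.const_mul η)
  have hg : Integrable g μ := hlin.add (hW2.const_mul _)
  calc ∫⁻ ω, ENNReal.ofReal (exp (η * W ω)) ∂μ
      ≤ ∫⁻ ω, ENNReal.ofReal (g ω) ∂μ :=
        lintegral_mono_ae (hexp_le.mono fun ω hω ↦ ENNReal.ofReal_le_ofReal hω)
    _ = ENNReal.ofReal (∫ ω, g ω ∂μ) :=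
        (ofReal_integral_eq_lintegral_ofReal hg
          (hexp_le.mono fun ω hω ↦ (exp_pos _).le.trans hω)).symm
    _ = ENNReal.ofReal (1 + A) := by
        rw [integral_add hlin (hW2.const_mul _),
          integral_add (integrable_const 1) (hW.const_mul η), integral_const_mul,
          integral_const_mul]
        simp only [integral_const, probReal_univ, smul_eq_mul, one_mul, add_assoc, A]
    _ ≤ ENNReal.ofReal (exp A) := ENNReal.ofReal_le_ofReal (by linarith [add_one_le_exp A])

theorem lintegral_exp_bernstein_le_one (hη : 0 ≤ η) (hWb : ∀ᵐ ω ∂μ, W ω ≤ b)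
    (hW : Integrable W μ) (hW2 : Integrable (fun ω ↦ W ω ^ 2) μ) :
    ∫⁻ ω, ENNReal.ofReal (exp (η * (W ω - ∫ ω, W ω ∂μ
      - η * bernsteinPhi (η * b) * ∫ ω, W ω ^ 2 ∂μ))) ∂μ ≤ 1 := by
  set A := η * ∫ ω, W ω ∂μ + η ^ 2 * bernsteinPhi (η * b) * ∫ ω, W ω ^ 2 ∂μ
  have hsplit : ∀ ω, ENNReal.ofReal (exp (η * (W ω - ∫ ω, W ω ∂μ
      - η * bernsteinPhi (η * b) * ∫ ω, W ω ^ 2 ∂μ))) =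
      ENNReal.ofReal (exp (-A)) * ENNReal.ofReal (exp (η * W ω)) := fun ω ↦ by
    rw [← ENNReal.ofReal_mul (exp_pos _).le, ← exp_add]
    congr 2
    ring
  calc _ = ENNReal.ofReal (exp (-A)) * ∫⁻ ω, ENNReal.ofReal (exp (η * W ω)) ∂μ := by
        simp_rw [hsplit]
        exact lintegral_const_mul' _ _ ENNReal.ofReal_ne_top
    _ ≤ ENNReal.ofReal (exp (-A)) * ENNReal.ofReal (exp A) :=
        mul_le_mul_right (lintegral_exp_mul_le_bernstein hη hWb hW hW2) _
    _ = 1 := by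
        rw [← ENNReal.ofReal_mul (exp_pos _).le, ← exp_add, neg_add_cancel, exp_zero,
          ENNReal.ofReal_one]

end Bernstein

section ExpSupermartingale

variable {ι : Type*} [Fintype ι] [LinearOrder ι] {X : ι → Type*} [∀ i, MeasurableSpace (X i)]
  (μ : ∀ i, Measure (X i)) [∀ i, IsProbabilityMeasure (μ i)]

theorem lintegral_pi_exp_sum_le_one {D : ι → (∀ i, X i) → ℝ} (hD : ∀ i, Measurable (D i))
    (hadapted : ∀ i, DependsOn (D i) (Set.Iic i))
    (hstep : ∀ i x, ∫⁻ t, ENNReal.ofReal (exp (D i (update x i t))) ∂μ i ≤ 1) (s : Finset ι) :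
    ∫⁻ x, ENNReal.ofReal (exp (∑ i ∈ s, D i x)) ∂Measure.pi μ ≤ 1 := by
  have hmeas : ∀ s : Finset ι, Measurable fun x ↦ ENNReal.ofReal (exp (∑ i ∈ s, D i x)) :=
    fun s ↦ (Finset.measurable_sum s fun i _ ↦ hD i).exp.ennreal_ofReal
  induction s using Finset.induction_on_max with
  | empty => simp
  | insert a s hlt ih =>
    refine le_trans (lintegral_le_of_lmarginal_le {a} (hmeas _) (hmeas s) fun x ↦ ?_) ih
    have hsum_update : ∀ t, ∑ i ∈ s, D i (update x a t) = ∑ i ∈ s, D i x :=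
      fun t ↦ Finset.sum_congr rfl fun i hi ↦ hadapted i fun j hj ↦
        update_of_ne (ne_of_lt (lt_of_le_of_lt hj (hlt i hi))) t x
    have hnot : a ∉ s := fun ha ↦ lt_irrefl a (hlt a ha)
    calc (∫⋯∫⁻_{a}, fun x ↦ ENNReal.ofReal (exp (∑ i ∈ insert a s, D i x)) ∂μ) x
        = ENNReal.ofReal (exp (∑ i ∈ s, D i x)) *
            ∫⁻ t, ENNReal.ofReal (exp (D a (update x a t))) ∂μ a := by
          rw [lmarginal_singleton, ← lintegral_const_mul' _ _ ENNReal.ofReal_ne_top]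
          refine lintegral_congr fun t ↦ ?_
          rw [Finset.sum_insert hnot, hsum_update, exp_add, ENNReal.ofReal_mul (exp_pos _).le,
            mul_comm]
      _ ≤ ENNReal.ofReal (exp (∑ i ∈ s, D i x)) := mul_le_of_le_one_right' (hstep a x)
      _ = (∫⋯∫⁻_{a}, fun x ↦ ENNReal.ofReal (exp (∑ i ∈ s, D i x)) ∂μ) x := by
          simp [lmarginal_singleton, hsum_update]

end ExpSupermartingale

theorem ofReal_one_sub_le_measure_le_log {Ω : Type*} [MeasurableSpace Ω] {P : Measure Ω}
    [IsProbabilityMeasure P] {Y : Ω → ℝ} (hY : AEMeasurable Y P)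
    (hexp : ∫⁻ ω, ENNReal.ofReal (exp (Y ω)) ∂P ≤ 1) {ε : ℝ} (hε : 0 < ε) :
    ENNReal.ofReal (1 - ε) ≤ P {ω | Y ω ≤ log (1 / ε)} := by
  have hε' : ENNReal.ofReal (1 / ε) ≠ 0 := ENNReal.ofReal_ne_zero_iff.2 (by positivity)
  have htail : P {ω | Y ω ≤ log (1 / ε)}ᶜ ≤ ENNReal.ofReal ε :=
    calc P {ω | Y ω ≤ log (1 / ε)}ᶜ
        ≤ P {ω | ENNReal.ofReal (1 / ε) ≤ ENNReal.ofReal (exp (Y ω))} :=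
          measure_mono fun ω hω ↦ ENNReal.ofReal_le_ofReal <|
            (log_le_iff_le_exp (by positivity)).1 (le_of_lt (not_le.1 hω))
      _ ≤ (∫⁻ ω, ENNReal.ofReal (exp (Y ω)) ∂P) / ENNReal.ofReal (1 / ε) :=
          meas_ge_le_lintegral_div hY.exp.ennreal_ofReal hε' ENNReal.ofReal_ne_top
      _ ≤ 1 / ENNReal.ofReal (1 / ε) := by gcongr
      _ = ENNReal.ofReal ε := by
          rw [one_div, one_div, ENNReal.ofReal_inv_of_pos hε, inv_inv]
  rw [ENNReal.ofReal_sub _ hε.le, ENNReal.ofReal_one, tsub_le_iff_right, ← measure_univ (μ := P)]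
  exact (measure_univ_le_add_compl _).trans (by gcongr)

section ConditionalIntegral

variable {ι : Type*} [DecidableEq ι] {X : ι → Type*} [∀ i, MeasurableSpace (X i)]
  {f : (∀ i, X i) → ℝ} (i : ι) (ν : Measure (X i))

theorem Measurable.integral_update [SFinite ν] (hf : Measurable f) :
    Measurable fun x ↦ ∫ t, f (update x i t) ∂ν :=
  (hf.comp measurable_update').stronglyMeasurable.integral_prod_right'.measurable

theorem DependsOn.integral_update {s : Set ι} (hf : DependsOn f s) :
    DependsOn (fun x ↦ ∫ t, f (Function.update x i t) ∂ν) s := fun x y hxy ↦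
  integral_congr_ae <| .of_forall fun t ↦ hf fun j hj ↦ by
    rcases eq_or_ne j i with rfl | hji
    · simp
    · simp [update_of_ne hji, hxy j hj]

end ConditionalIntegral

/-- Martingale Bernstein-type deviation bound: with probability at least `1 − ε` over the
i.i.d. draw of `Z₀,…,Z_n`,
`Σᵢ ξᵢ(Z₀,…,Zᵢ) ≤ Σᵢ E_{Zᵢ} ξᵢ + η φ(ηb) Σᵢ E_{Zᵢ} ξᵢ² + log(1/ε)/η`. -/
theorem stmt16 {Z : Type*} [MeasurableSpace Z] (μ : Measure Z) [IsProbabilityMeasure μ]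
    (n : ℕ) (ξ : Fin (n + 1) → (Fin (n + 1) → Z) → ℝ) (b : ℝ)
    (hmeas : ∀ i, Measurable (ξ i))
    (hbound : ∀ i z, ξ i z ≤ b)
    (hdep : ∀ (i : Fin (n + 1)) (z w : Fin (n + 1) → Z),
      (∀ j, j ≤ i → z j = w j) → ξ i z = ξ i w)
    (hint : ∀ (i : Fin (n + 1)) (z : Fin (n + 1) → Z),
      Integrable (fun v => ξ i (Function.update z i v)) μ)
    (hint2 : ∀ (i : Fin (n + 1)) (z : Fin (n + 1) → Z),
      Integrable (fun v => (ξ i (Function.update z i v)) ^ 2) μ)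
    (η ε : ℝ) (hη : 0 < η) (hε : ε ∈ Set.Ioo (0:ℝ) 1) :
    ENNReal.ofReal (1 - ε) ≤
      Measure.pi (fun _ : Fin (n + 1) => μ)
        { z | ∑ i, ξ i z
            ≤ (∑ i, ∫ v, ξ i (Function.update z i v) ∂μ)
              + η * (if η * b = 0 then (1/2 : ℝ)
                  else (Real.exp (η * b) - 1 - η * b) / (η * b) ^ 2)
                * ∑ i, ∫ v, (ξ i (Function.update z i v)) ^ 2 ∂μ
              + Real.log (1 / ε) / η } := by
  rw [show (if η * b = 0 then (1 / 2 : ℝ) else _) = bernsteinPhi (η * b) from rfl]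
  set D : Fin (n + 1) → (Fin (n + 1) → Z) → ℝ := fun i z ↦ η * (ξ i z
    - ∫ v, ξ i (update z i v) ∂μ - η * bernsteinPhi (η * b) * ∫ v, ξ i (update z i v) ^ 2 ∂μ)
  have hD_meas : ∀ i, Measurable (D i) := fun i ↦
    (((hmeas i).sub ((hmeas i).integral_update i μ)).sub
      ((((hmeas i).pow_const 2).integral_update i μ).const_mul _)).const_mul η
  have hD_adapted : ∀ i, DependsOn (D i) (Set.Iic i) := fun i x y hxy ↦ by
    have hξ : DependsOn (ξ i) (Set.Iic i) := hdep i
    have hξ2 : DependsOn (fun z ↦ ξ i z ^ 2) (Set.Iic i) :=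
      fun _ _ h ↦ congrArg (· ^ 2) (hξ h)
    simp only [D, hξ hxy, hξ.integral_update i μ hxy, hξ2.integral_update i μ hxy]
  have hD_step : ∀ i z, ∫⁻ t, ENNReal.ofReal (exp (D i (update z i t))) ∂μ ≤ 1 :=
    fun i z ↦ by
      simpa only [D, update_idem] using lintegral_exp_bernstein_le_one hη.le
        (.of_forall fun v ↦ hbound i _) (hint i z) (hint2 i z)
  have hexp_sum := lintegral_pi_exp_sum_le_one (fun _ ↦ μ) hD_meas hD_adapted hD_step .univ
  refine (ofReal_one_sub_le_measure_le_log
    (Finset.measurable_sum _ fun i _ ↦ hD_meas i).aemeasurable hexp_sum hε.1).trans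
    (measure_mono fun z hz ↦ ?_)
  simp only [Set.mem_ofPred_eq, D, ← Finset.mul_sum, Finset.sum_sub_distrib] at hz ⊢
  rw [← sub_le_iff_le_add', le_div_iff₀ hη]
  linarith
end
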